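/- Fix μ ∈ (0,1) and let a ∈ ℝ. If for every k > 0 the PGN(μ,k) distribution is symmetric about a — that is, the pushforward of PGN(μ,k) under the map x ↦ 2a − x equals PGN(μ,k) for every k > 0 — then a = 0. -/

import Mathlib

open MeasureTheory Real Set

/-- Density of the chi-squared distribution with `k` degrees of freedom. -/
noncomputable def chiSqDensity (k : ℝ) (v : ℝ) : ℝ :=
  if 0 < v then v ^ (k / 2 - 1) * Real.exp (-v / 2) / ((2 : ℝ) ^ (k / 2) * Real.Gamma (k / 2))
  else 0

/-- The Beta function `B(a,b) = Γ(a)Γ(b)/Γ(a+b)`. -/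
noncomputable def realBeta (a b : ℝ) : ℝ := Real.Gamma a * Real.Gamma b / Real.Gamma (a + b)

/-- Density of the Beta(2μ, 2(1-μ)) distribution. -/
noncomputable def betaDensity (μ : ℝ) (u : ℝ) : ℝ :=
  if 0 < u ∧ u < 1 then
    u ^ (2 * μ - 1) * (1 - u) ^ (1 - 2 * μ) / realBeta (2 * μ) (2 * (1 - μ))
  else 0

/-- The chi-squared distribution with `k` degrees of freedom, as a measure on ℝ. -/
noncomputable def chiSqMeasure (k : ℝ) : Measure ℝ :=
  volume.withDensity (fun v => ENNReal.ofReal (chiSqDensity k v))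

/-- The Beta(2μ, 2(1-μ)) distribution, as a measure on ℝ. -/
noncomputable def betaMeasure (μ : ℝ) : Measure ℝ :=
  volume.withDensity (fun u => ENNReal.ofReal (betaDensity μ u))

/-- The polar-generalized normal distribution PGN(μ, k): the pushforward of
(chi-squared k) ⊗ (Beta(2μ, 2(1-μ))) under `(v, u) ↦ √v · cos (π u)`. -/
noncomputable def PGN (μ k : ℝ) : Measure ℝ :=
  Measure.map (fun p : ℝ × ℝ => Real.sqrt p.1 * Real.cos (π * p.2))
    ((chiSqMeasure k).prod (betaMeasure μ))

/-!
Symmetry of PGN(μ, k) about `a` forces its mean to be `a`. With `V ~ χ²_k` and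
`U ~ Beta` independent, the mean is `E[√V] · E[cos πU]`, and
`E[√V] = Γ((k+1)/2) / (Γ(k/2) √(1/2))` doubles from `k = 1` to `k = 3` while `E[cos πU]`
does not depend on `k`; hence `a = 2a`.
-/

lemma integral_id_eq_of_map_reflect_eq {ν : Measure ℝ} [IsProbabilityMeasure ν] {a : ℝ}
    (hν : Integrable (fun x => x) ν) (hsymm : ν.map (fun x => 2 * a - x) = ν) :
    ∫ x, x ∂ν = a := by
  have h : ∫ x, x ∂ν = ∫ x, (2 * a - x) ∂ν := by
    conv_lhs => rw [← hsymm]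
    exact integral_map (by fun_prop) aestronglyMeasurable_id
  rw [integral_sub (integrable_const _) hν, integral_const, probReal_univ, one_smul] at h
  linarith

section GammaMoments

open ProbabilityTheory

variable {a r : ℝ}

lemma measurable_gammaPDF (a r : ℝ) : Measurable (gammaPDF a r) :=
  (measurable_gammaPDFReal a r).ennreal_ofReal

lemma integral_gammaMeasure (ha : 0 < a) (hr : 0 < r) (g : ℝ → ℝ) :
    ∫ x, g x ∂gammaMeasure a r = ∫ x, gammaPDFReal a r x * g x := by
  rw [gammaMeasure, integral_withDensity_eq_integral_toReal_smul
    (measurable_gammaPDF a r) (ae_of_all _ fun _ => ENNReal.ofReal_lt_top)]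
  simp only [gammaPDF, ENNReal.toReal_ofReal (gammaPDFReal_nonneg ha hr _), smul_eq_mul]

lemma integrable_gammaMeasure_iff (ha : 0 < a) (hr : 0 < r) {g : ℝ → ℝ} :
    Integrable g (gammaMeasure a r) ↔ Integrable (fun x => gammaPDFReal a r x * g x) := by
  rw [gammaMeasure, integrable_withDensity_iff_integrable_smul'
    (measurable_gammaPDF a r) (ae_of_all _ fun _ => ENNReal.ofReal_lt_top)]
  simp only [gammaPDF, ENNReal.toReal_ofReal (gammaPDFReal_nonneg ha hr _), smul_eq_mul]

lemma gammaPDFReal_mul_rpow_ae_eq {s : ℝ} (ha : 0 < a) (hr : 0 < r) (has : 0 < a + s) :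
    (fun x => gammaPDFReal a r x * x ^ s) =ᵐ[volume]
      fun x => Gamma (a + s) / (Gamma a * r ^ s) * gammaPDFReal (a + s) r x := by
  filter_upwards [Measure.ae_ne volume 0] with x hx
  rcases hx.lt_or_gt with hneg | hpos
  · simp [gammaPDFReal, not_le.2 hneg]
  · have hxs : x ^ (a + s - 1) = x ^ (a - 1) * x ^ s := by
      rw [← Real.rpow_add hpos]; ring_nf
    have hrs : r ^ (a + s) = r ^ a * r ^ s := Real.rpow_add hr a s
    have := (Gamma_pos_of_pos ha).ne'
    have := (Real.rpow_pos_of_pos hr s).ne'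
    simp only [gammaPDFReal, if_pos hpos.le, hxs, hrs]
    field_simp

lemma integrable_rpow_gammaMeasure {s : ℝ} (ha : 0 < a) (hr : 0 < r) (has : 0 < a + s) :
    Integrable (fun x => x ^ s) (gammaMeasure a r) := by
  have := isProbabilityMeasure_gammaMeasure has hr
  have hpdf : Integrable (gammaPDFReal (a + s) r) := by
    simpa using (integrable_gammaMeasure_iff has hr).1 (integrable_const (1 : ℝ))
  rw [integrable_gammaMeasure_iff ha hr]
  exact (hpdf.const_mul _).congr (gammaPDFReal_mul_rpow_ae_eq ha hr has).symm

lemma integral_rpow_gammaMeasure {s : ℝ} (ha : 0 < a) (hr : 0 < r) (has : 0 < a + s) :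
    ∫ x, x ^ s ∂gammaMeasure a r = Gamma (a + s) / (Gamma a * r ^ s) := by
  have := isProbabilityMeasure_gammaMeasure has hr
  have hpdf : ∫ x, gammaPDFReal (a + s) r x = 1 := by
    simpa using (integral_gammaMeasure has hr fun _ => 1).symm
  rw [integral_gammaMeasure ha hr, integral_congr_ae (gammaPDFReal_mul_rpow_ae_eq ha hr has),
    integral_const_mul, hpdf, mul_one]

end GammaMoments

section ChiSquared

open ProbabilityTheory

instance sFinite_chiSqMeasure (k : ℝ) : SFinite (chiSqMeasure k) := by
  unfold chiSqMeasure; infer_instance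

-- Only a.e.: at `v = 0` the chi-squared density is `0` while `gammaPDFReal` uses `0 ^ (k/2 - 1)`.
lemma chiSqMeasure_eq_gammaMeasure {k : ℝ} (hk : 0 < k) :
    chiSqMeasure k = gammaMeasure (k / 2) (1 / 2) := by
  refine withDensity_congr_ae ?_
  filter_upwards [Measure.ae_ne volume 0] with v hv
  rcases hv.lt_or_gt with hneg | hpos
  · simp [chiSqDensity, gammaPDF, gammaPDFReal, not_lt.2 hneg.le, not_le.2 hneg]
  · have := (Gamma_pos_of_pos (half_pos hk)).ne'
    have := (Real.rpow_pos_of_pos two_pos (k / 2)).ne'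
    simp only [chiSqDensity, gammaPDF, gammaPDFReal, if_pos hpos, if_pos hpos.le,
      Real.div_rpow zero_le_one zero_le_two, Real.one_rpow]
    congr 1
    field_simp

lemma integral_sqrt_chiSqMeasure {k : ℝ} (hk : 0 < k) :
    ∫ v, √v ∂chiSqMeasure k =
      Gamma ((k + 1) / 2) / (Gamma (k / 2) * (1 / 2) ^ (1 / 2 : ℝ)) := by
  simp_rw [Real.sqrt_eq_rpow, chiSqMeasure_eq_gammaMeasure hk]
  rw [integral_rpow_gammaMeasure (by positivity) one_half_pos (by positivity)]
  ring_nf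

lemma integrable_sqrt_chiSqMeasure {k : ℝ} (hk : 0 < k) :
    Integrable (√·) (chiSqMeasure k) := by
  simp_rw [Real.sqrt_eq_rpow, chiSqMeasure_eq_gammaMeasure hk]
  exact integrable_rpow_gammaMeasure (by positivity) one_half_pos (by positivity)

lemma integral_sqrt_chiSqMeasure_three :
    ∫ v, √v ∂chiSqMeasure 3 = 2 * ∫ v, √v ∂chiSqMeasure 1 := by
  rw [integral_sqrt_chiSqMeasure three_pos, integral_sqrt_chiSqMeasure one_pos,
    show ((3 : ℝ) + 1) / 2 = 1 + 1 by norm_num, show (3 : ℝ) / 2 = 1 / 2 + 1 by norm_num,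
    Gamma_add_one one_ne_zero, Gamma_add_one one_half_pos.ne']
  have := (Gamma_pos_of_pos one_half_pos).ne'
  have := (Real.rpow_pos_of_pos one_half_pos (1 / 2 : ℝ)).ne'
  norm_num
  ring

lemma isProbabilityMeasure_chiSqMeasure {k : ℝ} (hk : 0 < k) :
    IsProbabilityMeasure (chiSqMeasure k) := by
  rw [chiSqMeasure_eq_gammaMeasure hk]
  exact isProbabilityMeasure_gammaMeasure (half_pos hk) one_half_pos

end ChiSquared

instance sFinite_betaMeasure (μ : ℝ) : SFinite (betaMeasure μ) := by
  unfold betaMeasure; infer_instance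

lemma betaDensity_eq_betaPDFReal (μ : ℝ) :
    betaDensity μ = ProbabilityTheory.betaPDFReal (2 * μ) (2 * (1 - μ)) := by
  ext u
  simp only [betaDensity, ProbabilityTheory.betaPDFReal, realBeta, ProbabilityTheory.beta]
  split_ifs
  · ring_nf
  · rfl

lemma betaMeasure_eq (μ : ℝ) :
    betaMeasure μ = ProbabilityTheory.betaMeasure (2 * μ) (2 * (1 - μ)) := by
  rw [betaMeasure, betaDensity_eq_betaPDFReal]
  rfl

lemma isProbabilityMeasure_betaMeasure {μ : ℝ} (hμ : μ ∈ Ioo (0 : ℝ) 1) :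
    IsProbabilityMeasure (betaMeasure μ) := by
  rw [betaMeasure_eq]
  exact ProbabilityTheory.isProbabilityMeasureBeta (by linarith [hμ.1]) (by linarith [hμ.2])

lemma measurable_sqrt_mul_cos : Measurable fun p : ℝ × ℝ => √p.1 * cos (π * p.2) := by
  fun_prop

lemma isProbabilityMeasure_PGN {μ k : ℝ} (hμ : μ ∈ Ioo (0 : ℝ) 1) (hk : 0 < k) :
    IsProbabilityMeasure (PGN μ k) := by
  have := isProbabilityMeasure_chiSqMeasure hk
  have := isProbabilityMeasure_betaMeasure hμ
  exact Measure.isProbabilityMeasure_map measurable_sqrt_mul_cos.aemeasurable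

lemma integrable_id_PGN {μ k : ℝ} (hμ : μ ∈ Ioo (0 : ℝ) 1) (hk : 0 < k) :
    Integrable (fun x => x) (PGN μ k) := by
  have := isProbabilityMeasure_betaMeasure hμ
  have hcos : Integrable (fun u => cos (π * u)) (betaMeasure μ) :=
    .of_bound (by fun_prop) 1 (ae_of_all _ fun u => abs_cos_le_one _)
  rw [PGN, integrable_map_measure measurable_id'.aestronglyMeasurable
    measurable_sqrt_mul_cos.aemeasurable]
  exact (integrable_sqrt_chiSqMeasure hk).mul_prod hcos

lemma integral_id_PGN (μ k : ℝ) :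
    ∫ x, x ∂PGN μ k =
      (∫ v, √v ∂chiSqMeasure k) * ∫ u, cos (π * u) ∂betaMeasure μ := by
  rw [PGN, integral_map measurable_sqrt_mul_cos.aemeasurable measurable_id'.aestronglyMeasurable]
  exact integral_prod_mul (fun v => √v) fun u => cos (π * u)

theorem stmt11 (μ : ℝ) (hμ : μ ∈ Set.Ioo (0:ℝ) 1) (a : ℝ)
    (h : ∀ k : ℝ, 0 < k → Measure.map (fun x : ℝ => 2 * a - x) (PGN μ k) = PGN μ k) :
    a = 0 := by
  have hmean (k : ℝ) (hk : 0 < k) :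
      (∫ v, √v ∂chiSqMeasure k) * ∫ u, cos (π * u) ∂betaMeasure μ = a := by
    have := isProbabilityMeasure_PGN hμ hk
    rw [← integral_id_PGN]
    exact integral_id_eq_of_map_reflect_eq (integrable_id_PGN hμ hk) (h k hk)
  have h1 := hmean 1 one_pos
  have h3 := hmean 3 three_pos
  rw [integral_sqrt_chiSqMeasure_three] at h3
  linear_combination h3 - 2 * h1
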